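/- arXiv:2006.05673 — 3 statements merged into one kernel-verified Lean document; each statement's English description precedes it below -/
import Mathlib

section
/- Let φ be a weight and ω ∈ ℝ^n non-resonant. If ω ∉ A_∞^φ, i.e. limsup_{k≠0} ln(|2π k·ω|^{-1})/φ(|k|) = +∞, then there exists a formal Fourier series f with sup_k |f_k| e^{rφ(|k|)} < ∞ for every r > 0 (i.e. f ∈ F_∞^φ), such that the solution g of the cohomological equation, given by g_k = (i2π k·ω)^{-1} f_k for k ≠ 0 and g_0 = 0, satisfies sup_k |g_k| e^{rφ(|k|)} = +∞ for every r < 0. -/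
open scoped ENNReal
open Filter

noncomputable section

/-- sup-norm of a lattice vector `k ∈ ℤⁿ`, `|k| = max_i |k_i|`. -/
def knorm {n : ℕ} (k : Fin n → ℤ) : ℝ :=
  ((Finset.univ.sup fun i => (k i).natAbs : ℕ) : ℝ)

/-- Euclidean pairing `k · ω`. -/
def dot {n : ℕ} (ω : Fin n → ℝ) (k : Fin n → ℤ) : ℝ := ∑ i, (k i : ℝ) * ω i

/-- Weighted sup-norm `‖f‖_r = sup_k |f_k| e^{r φ(|k|)}` (valued in `ℝ≥0∞`). -/
def fnorm {n : ℕ} (φ : ℝ → ℝ) (r : ℝ) (f : (Fin n → ℤ) → ℂ) : ℝ≥0∞ :=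
  ⨆ k : Fin n → ℤ, ENNReal.ofReal (‖f k‖ * Real.exp (r * φ (knorm k)))

/-- `γ_τ⁻¹(ω) = sup_{k ≠ 0} |2π k·ω|⁻¹ e^{-τ φ(|k|)}` (valued in `ℝ≥0∞`). -/
def gammaInv {n : ℕ} (φ : ℝ → ℝ) (τ : ℝ) (ω : Fin n → ℝ) : ℝ≥0∞ :=
  ⨆ k : {k : Fin n → ℤ // k ≠ 0},
    ENNReal.ofReal (|2 * Real.pi * dot ω (k : Fin n → ℤ)|⁻¹ *
      Real.exp (-τ * φ (knorm (k : Fin n → ℤ))))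

/-- The normalized solution of the cohomological equation:
`g_0 = 0`, `g_k = (i 2π k·ω)⁻¹ f_k` for `k ≠ 0`. -/
def sol {n : ℕ} (ω : Fin n → ℝ) (f : (Fin n → ℤ) → ℂ) : (Fin n → ℤ) → ℂ :=
  fun k => if k = 0 then 0 else (Complex.I * (2 * Real.pi * dot ω k))⁻¹ * f k

/-- A weight: continuous, vanishing at `0`, non-decreasing and non-negative on `[0,∞)`,
with `ln(1+t) = O(φ(t))`. -/
def IsWeight (φ : ℝ → ℝ) : Prop :=
  Continuous φ ∧ φ 0 = 0 ∧ MonotoneOn φ (Set.Ici 0) ∧ (∀ t, 0 ≤ t → 0 ≤ φ t) ∧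
    ∃ C > (0 : ℝ), ∃ T : ℝ, ∀ t ≥ T, Real.log (1 + t) ≤ C * φ t

end

/-!
Choose `k_j ≠ 0` with `|2π k_j·ω|⁻¹ e^{-(2j+1) φ(|k_j|)} > j` and put `f_{k_j} = e^{-j φ(|k_j|)}`
(for the first such `j`), `f = 0` elsewhere. Then `|f_k| e^{r φ(|k|)} ≤ 1` except at the finitely
many `k_j` with `j < r`, while `|g_{k_j}| e^{r φ(|k_j|)} > j e^{(j+1+r) φ(|k_j|)} ≥ j` once `j ≥ -r`.
-/

open Real

theorem ENNReal.iSup_ofReal_ne_top_of_le {ι : Sort*} {u : ι → ℝ} {C : ℝ} (h : ∀ i, u i ≤ C) :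
    ⨆ i, ENNReal.ofReal (u i) ≠ ⊤ :=
  ne_top_of_le_ne_top ENNReal.ofReal_ne_top (iSup_le fun i => ENNReal.ofReal_le_ofReal (h i))

theorem ENNReal.iSup_ofReal_eq_top_of_forall_exists_lt {ι : Sort*} {u : ι → ℝ}
    (h : ∀ M : ℝ, ∃ i, M < u i) : ⨆ i, ENNReal.ofReal (u i) = ⊤ := by
  refine iSup_eq_top.2 fun b hb => ?_
  obtain ⟨i, hi⟩ := h b.toReal
  exact ⟨i, (ENNReal.lt_ofReal_iff_toReal_lt hb.ne).2 hi⟩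

section DecayAlong

open Classical in
noncomputable def decayAlong {K : Type*} (ψ : K → ℝ) (s : ℕ → K) (k : K) : ℝ :=
  if h : ∃ j, s j = k then exp (-(Nat.find h : ℝ) * ψ k) else 0

variable {K : Type*} {ψ : K → ℝ} {s : ℕ → K}

theorem decayAlong_of_notMem_range {k : K} (hk : k ∉ Set.range s) : decayAlong ψ s k = 0 :=
  dif_neg hk

theorem decayAlong_nonneg (k : K) : 0 ≤ decayAlong ψ s k := by
  unfold decayAlong
  split_ifs
  exacts [(exp_pos _).le, le_rfl]

theorem exp_neg_mul_le_decayAlong (j : ℕ) (hψ : 0 ≤ ψ (s j)) :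
    exp (-(j : ℝ) * ψ (s j)) ≤ decayAlong ψ s (s j) := by
  classical
  have h : ∃ i, s i = s j := ⟨j, rfl⟩
  have hfind : (Nat.find h : ℝ) ≤ j := by exact_mod_cast Nat.find_min' h rfl
  rw [decayAlong, dif_pos h]
  exact exp_le_exp.2 (by nlinarith)

-- Only the finitely many `s j` with `j < r` can make the left-hand side exceed `1`.
theorem decayAlong_mul_exp_le (hψ : ∀ k, 0 ≤ ψ k) (r : ℝ) (k : K) :
    decayAlong ψ s k * exp (r * ψ k) ≤
      ∑ j ∈ Finset.range ⌈r⌉₊, exp (r * ψ (s j)) + 1 := by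
  classical
  have hsum : 0 ≤ ∑ j ∈ Finset.range ⌈r⌉₊, exp (r * ψ (s j)) :=
    Finset.sum_nonneg fun _ _ => (exp_pos _).le
  by_cases h : ∃ j, s j = k
  · rw [decayAlong, dif_pos h, ← exp_add]
    set m := Nat.find h
    have hm : s m = k := Nat.find_spec h
    rcases lt_or_ge m ⌈r⌉₊ with hmr | hmr
    · have hle : exp (-(m : ℝ) * ψ k + r * ψ k) ≤ exp (r * ψ (s m)) := by
        rw [hm]
        exact exp_le_exp.2 (by nlinarith [hψ k, (Nat.cast_nonneg m : (0 : ℝ) ≤ m)])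
      have hterm := Finset.single_le_sum (f := fun j => exp (r * ψ (s j)))
        (fun _ _ => (exp_pos _).le) (Finset.mem_range.2 hmr)
      linarith
    · have hrm : r ≤ m := (Nat.le_ceil r).trans (by exact_mod_cast hmr)
      have hle : exp (-(m : ℝ) * ψ k + r * ψ k) ≤ 1 :=
        exp_le_one_iff.2 (by nlinarith [hψ k])
      linarith
  · rw [decayAlong_of_notMem_range h, zero_mul]
    linarith

end DecayAlong

theorem exists_decay_of_forall_unbounded {K : Type*} (ψ a : K → ℝ) (S : Set K)
    (hψ : ∀ k, 0 ≤ ψ k) (ha : ∀ τ > 0, ∀ M : ℝ, ∃ k ∈ S, M < a k * exp (-τ * ψ k)) :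
    ∃ f : K → ℝ, (∀ k ∉ S, f k = 0) ∧ (∀ k, 0 ≤ f k) ∧
      (∀ r, ∃ C, ∀ k, f k * exp (r * ψ k) ≤ C) ∧
      (∀ r < 0, ∀ M : ℝ, ∃ k ∈ S, M < a k * f k * exp (r * ψ k)) := by
  choose s hsS hs using fun j : ℕ => ha (2 * j + 1) (by positivity) j
  refine ⟨decayAlong ψ s, fun k hk => decayAlong_of_notMem_range ?_, decayAlong_nonneg,
    fun r => ⟨_, decayAlong_mul_exp_le hψ r⟩, fun r _ M => ?_⟩
  · rintro ⟨j, rfl⟩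
    exact hk (hsS j)
  obtain ⟨j, hMj⟩ := exists_nat_ge (max M (-r))
  have hψj := hψ (s j)
  have ha_pos : 0 < a (s j) :=
    pos_of_mul_pos_left ((Nat.cast_nonneg j).trans_lt (hs j)) (exp_pos _).le
  refine ⟨s j, hsS j, ?_⟩
  calc M ≤ j := (le_max_left _ _).trans hMj
    _ < a (s j) * exp (-(2 * j + 1) * ψ (s j)) := hs j
    _ ≤ a (s j) * (exp (-(j : ℝ) * ψ (s j)) * exp (r * ψ (s j))) := by
        rw [← exp_add]
        gcongr
        nlinarith [(le_max_right M (-r)).trans hMj]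
    _ ≤ a (s j) * decayAlong ψ s (s j) * exp (r * ψ (s j)) := by
        rw [← mul_assoc]
        gcongr
        exact exp_neg_mul_le_decayAlong j hψj

theorem exists_lt_of_gammaInv_eq_top {n : ℕ} {φ : ℝ → ℝ} {τ : ℝ} {ω : Fin n → ℝ}
    (h : gammaInv φ τ ω = ⊤) (M : ℝ) :
    ∃ k ≠ 0, M < |2 * π * dot ω k|⁻¹ * exp (-τ * φ (knorm k)) := by
  obtain ⟨⟨k, hk⟩, hlt⟩ := iSup_eq_top.1 h (ENNReal.ofReal M) ENNReal.ofReal_lt_top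
  exact ⟨k, hk, (ENNReal.ofReal_lt_ofReal_iff'.1 hlt).1⟩

theorem norm_sol {n : ℕ} (ω : Fin n → ℝ) (f : (Fin n → ℤ) → ℂ) {k : Fin n → ℤ} (hk : k ≠ 0) :
    ‖sol ω f k‖ = |2 * π * dot ω k|⁻¹ * ‖f k‖ := by
  rw [sol, if_neg hk, norm_mul, norm_inv, norm_mul, Complex.norm_I, one_mul]
  norm_cast

theorem stmt1_general {n : ℕ} (φ : ℝ → ℝ) (hφ : IsWeight φ)
    (ω : Fin n → ℝ) (hω : ∀ τ : ℝ, 0 < τ → gammaInv φ τ ω = ⊤) :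
    ∃ f : (Fin n → ℤ) → ℂ, f 0 = 0 ∧
      (∀ r : ℝ, 0 < r → fnorm φ r f ≠ ⊤) ∧
      (∀ r : ℝ, r < 0 → fnorm φ r (sol ω f) = ⊤) := by
  obtain ⟨f, hf0, hf_nonneg, hf_decay, hsol_growth⟩ :=
    exists_decay_of_forall_unbounded (fun k => φ (knorm k)) (fun k => |2 * π * dot ω k|⁻¹)
      {k | k ≠ 0} (fun k => hφ.2.2.2.1 _ (Nat.cast_nonneg _))
      fun τ hτ => exists_lt_of_gammaInv_eq_top (hω τ hτ)
  have hnorm (k : Fin n → ℤ) : ‖(f k : ℂ)‖ = f k := by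
    rw [Complex.norm_real, Real.norm_of_nonneg (hf_nonneg k)]
  refine ⟨fun k => f k, by simp [hf0 0], fun r _ => ?_, fun r hr => ?_⟩
  · obtain ⟨C, hC⟩ := hf_decay r
    exact ENNReal.iSup_ofReal_ne_top_of_le fun k => (hnorm k).symm ▸ hC k
  · refine ENNReal.iSup_ofReal_eq_top_of_forall_exists_lt fun M => ?_
    obtain ⟨k, hk0, hk⟩ := hsol_growth r hr M
    refine ⟨k, ?_⟩
    rwa [norm_sol ω _ hk0, hnorm]

/-- if `ω ∉ A_∞^φ` (i.e. `γ_τ⁻¹(ω) = ∞` for every `τ > 0`), there is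
`f ∈ F_∞^φ` whose solution `g` satisfies `‖g‖_r = ∞` for every `r < 0`. -/
theorem stmt1 {n : ℕ} (φ : ℝ → ℝ) (hφ : IsWeight φ)
    (ω : Fin n → ℝ) (hnr : ∀ k : Fin n → ℤ, k ≠ 0 → dot ω k ≠ 0)
    (hω : ∀ τ : ℝ, 0 < τ → gammaInv φ τ ω = ⊤) :
    ∃ f : (Fin n → ℤ) → ℂ, f 0 = 0 ∧
      (∀ r : ℝ, 0 < r → fnorm φ r f ≠ ⊤) ∧
      (∀ r : ℝ, r < 0 → fnorm φ r (sol ω f) = ⊤) :=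
  stmt1_general φ hφ ω hω
end

section
/- For a non-resonant vector ω ∈ ℝ^n and a weight φ: ω ∈ A_∞^φ (i.e. ln(|2πk·ω|^{-1}) = O(φ(|k|))) if and only if for every f ∈ F_∞^φ with f_0 = 0, the function g defined by g_0 = 0 and g_k = (i2πk·ω)^{-1} f_k belongs to F_∞^φ. -/
open scoped ENNReal
open Filter

/-!
If `γ_τ⁻¹(ω) < ∞`, then `|g_k| e^{r φ(|k|)} ≤ γ_τ⁻¹(ω) · |f_k| e^{(r + τ) φ(|k|)}`: the small
divisors cost only the shift `r ↦ r + τ` of the analyticity exponent.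

Conversely, if `γ_τ⁻¹(ω) = ∞` for every `τ > 0`, choose frequencies `K m ≠ 0` with
`|2π K m · ω|⁻¹ e^{-(m+1) φ(|K m|)} > m` and let `f_{K m} = e^{-(m+1) φ(|K m|)}` (for the least
such `m`), `f = 0` elsewhere. Against the weight `e^{r φ}` only the finitely many `m < r` give
coefficients above `1`, so `f ∈ F_∞^φ`; but `|g_{K m}| e^{φ(|K m|)} > m`, so `g ∉ F_1^φ`.
-/

open Real Finset

lemma ENNReal.iSup_ofReal_eq_top_iff {ι : Sort*} {g : ι → ℝ} :
    ⨆ i, ENNReal.ofReal (g i) = ⊤ ↔ ∀ M : ℝ, ∃ i, M < g i := by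
  rw [iSup_eq_top]
  refine ⟨fun h M ↦ ?_, fun h b hb ↦ ?_⟩
  · obtain ⟨i, hi⟩ := h (ENNReal.ofReal M) ENNReal.ofReal_lt_top
    exact ⟨i, (ENNReal.ofReal_lt_ofReal_iff'.mp hi).1⟩
  · obtain ⟨i, hi⟩ := h b.toReal
    exact ⟨i, (ENNReal.lt_ofReal_iff_toReal_lt hb.ne).mpr hi⟩

section

variable {n : ℕ}

lemma knorm_nonneg (k : Fin n → ℤ) : 0 ≤ knorm k := by
  unfold knorm; positivity

lemma norm_sol_of_ne_zero (ω : Fin n → ℝ) (f : (Fin n → ℤ) → ℂ) {k : Fin n → ℤ} (hk : k ≠ 0) :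
    ‖sol ω f k‖ = |2 * π * dot ω k|⁻¹ * ‖f k‖ := by
  have hcast : Complex.I * (2 * π * dot ω k) = Complex.I * ((2 * π * dot ω k : ℝ) : ℂ) := by
    push_cast; ring
  rw [sol, if_neg hk, norm_mul, hcast, norm_inv, norm_mul, Complex.norm_I, Complex.norm_real,
    Real.norm_eq_abs, one_mul]

lemma fnorm_sol_le (φ : ℝ → ℝ) (ω : Fin n → ℝ) (τ r : ℝ) (f : (Fin n → ℤ) → ℂ) :
    fnorm φ r (sol ω f) ≤ gammaInv φ τ ω * fnorm φ (r + τ) f := by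
  refine iSup_le fun k ↦ ?_
  by_cases hk : k = 0
  · simp [sol, hk]
  have hsplit : ‖sol ω f k‖ * exp (r * φ (knorm k)) =
      (|2 * π * dot ω k|⁻¹ * exp (-τ * φ (knorm k))) *
        (‖f k‖ * exp ((r + τ) * φ (knorm k))) := by
    rw [norm_sol_of_ne_zero ω f hk, mul_mul_mul_comm, ← exp_add]
    ring_nf
  rw [hsplit, ENNReal.ofReal_mul (by positivity)]
  exact mul_le_mul' (le_iSup_of_le ⟨k, hk⟩ le_rfl) (le_iSup_of_le k le_rfl)

open Classical in
noncomputable def firstHitSeries (φ : ℝ → ℝ) (K : ℕ → Fin n → ℤ) : (Fin n → ℤ) → ℂ := fun k ↦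
  if h : ∃ m, K m = k then (exp (-((Nat.find h : ℝ) + 1) * φ (knorm k)) : ℂ) else 0

variable {φ : ℝ → ℝ} {K : ℕ → Fin n → ℤ}

lemma firstHitSeries_of_forall_ne {k : Fin n → ℤ} (hk : ∀ m, K m ≠ k) :
    firstHitSeries φ K k = 0 := by
  simp [firstHitSeries, hk]

lemma exp_le_norm_firstHitSeries (hφ : ∀ t, 0 ≤ t → 0 ≤ φ t) (m : ℕ) :
    exp (-((m : ℝ) + 1) * φ (knorm (K m))) ≤ ‖firstHitSeries φ K (K m)‖ := by
  have h : ∃ m', K m' = K m := ⟨m, rfl⟩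
  have hle : (Nat.find h : ℝ) ≤ m := by exact_mod_cast Nat.find_min' h rfl
  rw [firstHitSeries, dif_pos h, Complex.norm_real, Real.norm_of_nonneg (exp_pos _).le]
  have hφK := hφ _ (knorm_nonneg (K m))
  gcongr

lemma fnorm_firstHitSeries_ne_top (hφ : ∀ t, 0 ≤ t → 0 ≤ φ t) (r : ℝ) :
    fnorm φ r (firstHitSeries φ K) ≠ ⊤ := by
  rw [fnorm, Ne, ENNReal.iSup_ofReal_eq_top_iff]
  simp only [not_forall, not_exists, not_lt]
  have hsum : 0 ≤ ∑ m ∈ range ⌈r⌉₊, exp (r * φ (knorm (K m))) := by positivity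
  refine ⟨1 + ∑ m ∈ range ⌈r⌉₊, exp (r * φ (knorm (K m))), fun k ↦ ?_⟩
  by_cases h : ∃ m, K m = k
  swap
  · simp only [firstHitSeries, dif_neg h, norm_zero, zero_mul]
    linarith
  rw [firstHitSeries, dif_pos h, Complex.norm_real, Real.norm_of_nonneg (exp_pos _).le,
    ← exp_add]
  have hφk := hφ _ (knorm_nonneg k)
  obtain hm | hm := lt_or_ge (Nat.find h) ⌈r⌉₊
  · calc exp (-((Nat.find h : ℝ) + 1) * φ (knorm k) + r * φ (knorm k))
        ≤ exp (r * φ (knorm (K (Nat.find h)))) := by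
          rw [Nat.find_spec h]; gcongr; nlinarith
      _ ≤ ∑ m ∈ range ⌈r⌉₊, exp (r * φ (knorm (K m))) :=
          single_le_sum (f := fun m ↦ exp (r * φ (knorm (K m)))) (fun _ _ ↦ (exp_pos _).le)
            (mem_range.2 hm)
      _ ≤ _ := le_add_of_nonneg_left zero_le_one
  · have hr : r ≤ Nat.find h := (Nat.le_ceil r).trans (by exact_mod_cast hm)
    calc exp (-((Nat.find h : ℝ) + 1) * φ (knorm k) + r * φ (knorm k))
        ≤ exp 0 := exp_le_exp.2 (by nlinarith)
      _ ≤ _ := by rw [exp_zero]; exact le_add_of_nonneg_right hsum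

lemma fnorm_sol_firstHitSeries_eq_top (hφ : ∀ t, 0 ≤ t → 0 ≤ φ t) {ω : Fin n → ℝ}
    (hK0 : ∀ m, K m ≠ 0)
    (hK : ∀ m : ℕ, (m : ℝ) < |2 * π * dot ω (K m)|⁻¹ * exp (-((m : ℝ) + 1) * φ (knorm (K m))))
    {r : ℝ} (hr : 0 ≤ r) :
    fnorm φ r (sol ω (firstHitSeries φ K)) = ⊤ := by
  rw [fnorm, ENNReal.iSup_ofReal_eq_top_iff]
  intro M
  refine ⟨K ⌈M⌉₊, ?_⟩
  calc M ≤ ⌈M⌉₊ := Nat.le_ceil M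
    _ < |2 * π * dot ω (K ⌈M⌉₊)|⁻¹ * exp (-((⌈M⌉₊ : ℝ) + 1) * φ (knorm (K ⌈M⌉₊))) := hK _
    _ ≤ |2 * π * dot ω (K ⌈M⌉₊)|⁻¹ * ‖firstHitSeries φ K (K ⌈M⌉₊)‖ := by
        gcongr; exact exp_le_norm_firstHitSeries hφ _
    _ = ‖sol ω (firstHitSeries φ K) (K ⌈M⌉₊)‖ := (norm_sol_of_ne_zero ω _ (hK0 _)).symm
    _ ≤ _ := le_mul_of_one_le_right (norm_nonneg _)
        (one_le_exp (mul_nonneg hr (hφ _ (knorm_nonneg _))))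

end

theorem stmt3_general {n : ℕ} (φ : ℝ → ℝ) (hφ : IsWeight φ)
    (ω : Fin n → ℝ) :
    (∃ τ : ℝ, 0 < τ ∧ gammaInv φ τ ω ≠ ⊤) ↔
      (∀ f : (Fin n → ℤ) → ℂ, f 0 = 0 →
        (∀ r : ℝ, 0 < r → fnorm φ r f ≠ ⊤) →
        (∀ r : ℝ, 0 < r → fnorm φ r (sol ω f) ≠ ⊤)) := by
  have hφ0 : ∀ t, 0 ≤ t → 0 ≤ φ t := hφ.2.2.2.1
  constructor
  · rintro ⟨τ, hτ, hγ⟩ f - hf r hr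
    exact ne_top_of_le_ne_top (ENNReal.mul_ne_top hγ (hf _ (by positivity)))
      (fnorm_sol_le φ ω τ r f)
  · intro hsolve
    by_contra! hA
    have hbig (m : ℕ) : ∃ k : {k : Fin n → ℤ // k ≠ 0},
        (m : ℝ) < |2 * π * dot ω k|⁻¹ * exp (-((m : ℝ) + 1) * φ (knorm (k : Fin n → ℤ))) :=
      ENNReal.iSup_ofReal_eq_top_iff.mp (hA _ (by positivity)) m
    choose K hK using hbig
    have hK0 (m : ℕ) : (K m : Fin n → ℤ) ≠ 0 := (K m).2
    exact hsolve _ (firstHitSeries_of_forall_ne hK0) (fun r _ ↦ fnorm_firstHitSeries_ne_top hφ0 r)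
      1 one_pos (fnorm_sol_firstHitSeries_eq_top hφ0 hK0 hK zero_le_one)

/-- `ω ∈ A_∞^φ` iff the cohomological equation can be solved in `F_∞^φ`. -/
theorem stmt3 {n : ℕ} (φ : ℝ → ℝ) (hφ : IsWeight φ)
    (ω : Fin n → ℝ) (hnr : ∀ k : Fin n → ℤ, k ≠ 0 → dot ω k ≠ 0) :
    (∃ τ : ℝ, 0 < τ ∧ gammaInv φ τ ω ≠ ⊤) ↔
      (∀ f : (Fin n → ℤ) → ℂ, f 0 = 0 →
        (∀ r : ℝ, 0 < r → fnorm φ r f ≠ ⊤) →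
        (∀ r : ℝ, 0 < r → fnorm φ r (sol ω f) ≠ ⊤)) :=
  stmt3_general φ hφ ω
end

section
/- Let 0 < a < 1, τ₀ > 0 and let Γ(σ) := sup_{t≥0} (1+t) e^{τ₀ t^a/a − σt} for σ > 0. Then Γ(σ) < ∞ for all σ > 0, and for any τ > τ₀ there exists σ* > 0 such that Γ(σ) ≤ exp(τ φ_b(τ/σ)) for all 0 < σ ≤ σ*, where b = a/(1-a) and φ_b(s) = s^b/b. -/
/-!
Young's inequality for the conjugate exponents `1/a` and `1/(1-a)` gives
`τ t^a/a - σ t ≤ τ φ_b(τ/σ)` for all `t ≥ 0`. The factor `1 + t` is absorbed by spending a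
little of the exponent: `(1 + t)^a ≤ 1 + t^a` and `log x ≤ x - 1` give
`1 + t ≤ C_δ e^{δ t^a/a}` for every `δ > 0`. So `Γ(σ) ≤ C_δ e^{τ' φ_b(τ'/σ)}` with `τ' = τ₀ + δ`,
and for `τ > τ'` the gap `(τ^{b+1} - τ'^{b+1}) σ^{-b} / b` between the exponents
`τ φ_b(τ/σ)` and `τ' φ_b(τ'/σ)` beats `log C_δ` as `σ → 0⁺`.
-/

open Real Filter Topology Set

lemma mul_rpow_div_sub_mul_le {a b τ σ t : ℝ} (ha0 : 0 < a) (ha1 : a < 1) (hb : b = a / (1 - a))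
    (hτ : 0 < τ) (hσ : 0 < σ) (ht : 0 ≤ t) :
    τ * (t ^ a / a) - σ * t ≤ τ * ((τ / σ) ^ b / b) := by
  have h1a : 0 < 1 - a := by linarith
  have hba : b * (1 - a) = a := by rw [hb]; field_simp
  have hamgm := geom_mean_le_arith_mean2_weighted ha0.le h1a.le
    (by positivity : 0 ≤ σ * t / a) (by positivity : 0 ≤ τ / a * (τ / σ) ^ b) (by ring)
  have hgeom : (σ * t / a) ^ a * (τ / a * (τ / σ) ^ b) ^ (1 - a) = τ * (t ^ a / a) :=
    calc (σ * t / a) ^ a * (τ / a * (τ / σ) ^ b) ^ (1 - a)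
        = (σ * t / a * (τ / σ)) ^ a * (τ / a) ^ (1 - a) := by
          rw [mul_rpow (by positivity) (by positivity), ← rpow_mul (by positivity), hba,
            mul_rpow (by positivity) (by positivity)]
          ring
      _ = (τ / a) ^ a * (τ / a) ^ (1 - a) * t ^ a := by
          rw [show σ * t / a * (τ / σ) = τ / a * t by field_simp, mul_rpow (by positivity) ht]
          ring
      _ = τ * (t ^ a / a) := by
          rw [← rpow_add (by positivity), add_sub_cancel, rpow_one]
          ring
  have harith : a * (σ * t / a) + (1 - a) * (τ / a * (τ / σ) ^ b) =
      σ * t + τ * ((τ / σ) ^ b / b) := by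
    rw [hb]; field_simp
  linarith

lemma one_add_le_exp_rpow {a δ t : ℝ} (ha0 : 0 < a) (ha1 : a ≤ 1) (hδ : 0 < δ) (ht : 0 ≤ t) :
    1 + t ≤ exp (δ * (t ^ a / a) + (δ - 1 - log δ) / a) := by
  have hsub : (1 + t) ^ a ≤ 1 + t ^ a := by
    have := NNReal.rpow_add_le_add_rpow 1 t.toNNReal ha0.le ha1
    rwa [← NNReal.coe_le_coe, NNReal.coe_rpow, NNReal.coe_add, NNReal.coe_add, NNReal.coe_rpow,
      NNReal.coe_rpow, NNReal.coe_one, one_rpow, coe_toNNReal _ ht] at this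
  have hlog : log ((1 + t) ^ a) ≤ δ * (1 + t) ^ a - 1 - log δ := by
    have := log_le_sub_one_of_pos (by positivity : 0 < δ * (1 + t) ^ a)
    rw [log_mul hδ.ne' (by positivity)] at this
    linarith
  rw [log_rpow (by positivity)] at hlog
  rw [← exp_log (by positivity : 0 < 1 + t), exp_le_exp]
  refine le_of_mul_le_mul_left ?_ ha0
  rw [mul_add, mul_div_cancel₀ _ ha0.ne', mul_left_comm, mul_div_cancel₀ _ ha0.ne']
  linarith [mul_le_mul_of_nonneg_left hsub hδ.le]

lemma one_add_mul_exp_le_exp {a b τ₀ τ σ t : ℝ} (ha0 : 0 < a) (ha1 : a < 1)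
    (hb : b = a / (1 - a)) (hτ : 0 < τ) (hτ₀τ : τ₀ < τ) (hσ : 0 < σ) (ht : 0 ≤ t) :
    (1 + t) * exp (τ₀ * (t ^ a / a) - σ * t) ≤
      exp ((τ - τ₀ - 1 - log (τ - τ₀)) / a + τ * ((τ / σ) ^ b / b)) := by
  have hlin := one_add_le_exp_rpow ha0 ha1.le (sub_pos.2 hτ₀τ) ht
  have hyoung := mul_rpow_div_sub_mul_le ha0 ha1 hb hτ hσ ht
  calc (1 + t) * exp (τ₀ * (t ^ a / a) - σ * t)
      ≤ exp ((τ - τ₀) * (t ^ a / a) + (τ - τ₀ - 1 - log (τ - τ₀)) / a) *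
          exp (τ₀ * (t ^ a / a) - σ * t) := by gcongr
    _ ≤ _ := by rw [← exp_add, exp_le_exp]; linarith

lemma tendsto_mul_rpow_div_sub_mul_rpow_div {b τ' τ : ℝ} (hb : 0 < b) (hτ' : 0 ≤ τ')
    (hτ'τ : τ' < τ) :
    Tendsto (fun σ => τ * ((τ / σ) ^ b / b) - τ' * ((τ' / σ) ^ b / b)) (𝓝[>] 0) atTop := by
  have hK : 0 < (τ * τ ^ b - τ' * τ' ^ b) / b :=
    div_pos (sub_pos.2 (mul_lt_mul'' hτ'τ (rpow_lt_rpow hτ' hτ'τ hb) hτ' (by positivity))) hb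
  refine ((tendsto_rpow_neg_nhdsGT_zero (neg_lt_zero.2 hb)).const_mul_atTop hK).congr' ?_
  filter_upwards [self_mem_nhdsWithin] with σ hσ
  rw [div_rpow (by linarith) (le_of_lt hσ), div_rpow hτ' (le_of_lt hσ), rpow_neg (le_of_lt hσ)]
  ring

/-- `Γ(σ) = sup_{t≥0} (1+t) e^{τ₀ t^a/a − σt}` is finite for all `σ > 0`,
and for any `τ > τ₀` there is `σ* > 0` with `Γ(σ) ≤ e^{τ φ_b(τ/σ)}` for `0 < σ ≤ σ*`,
where `b = a/(1-a)` and `φ_b(s) = s^b/b`. -/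
theorem stmt16 (a τ₀ b : ℝ) (ha0 : 0 < a) (ha1 : a < 1) (hτ₀ : 0 < τ₀)
    (hb : b = a / (1 - a)) :
    (∀ σ : ℝ, 0 < σ →
      BddAbove {y : ℝ | ∃ t : ℝ, 0 ≤ t ∧ y = (1 + t) * Real.exp (τ₀ * (t ^ a / a) - σ * t)}) ∧
    (∀ τ : ℝ, τ₀ < τ → ∃ σs : ℝ, 0 < σs ∧ ∀ σ : ℝ, 0 < σ → σ ≤ σs →
      sSup {y : ℝ | ∃ t : ℝ, 0 ≤ t ∧ y = (1 + t) * Real.exp (τ₀ * (t ^ a / a) - σ * t)}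
        ≤ Real.exp (τ * ((τ / σ) ^ b / b))) := by
  have hbpos : 0 < b := by rw [hb]; exact div_pos ha0 (by linarith)
  refine ⟨fun σ hσ => ?_, fun τ hτ => ?_⟩
  · exact ⟨_, by
      rintro _ ⟨t, ht, rfl⟩
      exact one_add_mul_exp_le_exp (τ := τ₀ + 1) ha0 ha1 hb (by linarith) (by linarith) hσ ht⟩
  · obtain ⟨τ', hτ₀τ', hτ'τ⟩ := exists_between hτ
    obtain ⟨σs, hσs, hsub⟩ := mem_nhdsGT_iff_exists_Ioc_subset.1
      ((tendsto_mul_rpow_div_sub_mul_rpow_div hbpos (τ' := τ') (τ := τ) (by linarith)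
        (by linarith)).eventually_ge_atTop ((τ' - τ₀ - 1 - log (τ' - τ₀)) / a))
    refine ⟨σs, hσs, fun σ hσ hσσs => Real.sSup_le ?_ (exp_pos _).le⟩
    rintro _ ⟨t, ht, rfl⟩
    refine (one_add_mul_exp_le_exp (τ := τ') ha0 ha1 hb (by linarith) (by linarith) hσ ht).trans ?_
    have hgap : (τ' - τ₀ - 1 - log (τ' - τ₀)) / a ≤
        τ * ((τ / σ) ^ b / b) - τ' * ((τ' / σ) ^ b / b) := hsub ⟨hσ, hσσs⟩
    rw [exp_le_exp]
    linarith
end
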